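/- arXiv:2008.11752 — 6 statements merged into one kernel-verified Lean document; each statement's English description precedes it below -/
import Mathlib

section
/- For positive reals TP, FP and positive reals b₁, b₂, the Precision of the row-scaled confusion matrix equals the Precision of the original matrix if and only if b₁ = b₂; that is, b₁TP/(b₁TP + b₂FP) = TP/(TP+FP) if and only if b₁ = b₂. In particular, Precision is not invariant under row scaling by distinct factors. -/
/-- The Precision index `ζ` of a two-class confusion matrix is invariant
under row scaling by positive factors `b₁`, `b₂` if and only if `b₁ = b₂`. -/
theorem precision_invariant_iff_equal_scaling
    (TP FP b₁ b₂ : ℝ)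
    (hTP : 0 < TP) (hFP : 0 < FP)
    (hb₁ : 0 < b₁) (hb₂ : 0 < b₂) :
    b₁ * TP / (b₁ * TP + b₂ * FP) = TP / (TP + FP) ↔ b₁ = b₂ := by
  have h1 : 0 < b₁ * TP + b₂ * FP := by positivity
  have h2 : 0 < TP + FP := by positivity
  rw [div_eq_div_iff h1.ne' h2.ne']
  constructor
  · intro h
    have := mul_pos hTP hFP
    nlinarith [mul_pos hTP hFP]
  · intro h; subst h; ring
end

section
/- For reals TP>0, FP>0, FN≥0 with TP+FN>0, and positive reals b₁, b₂, the AURPC of the row-scaled confusion matrix equals the AURPC of the original matrix if and only if b₁ = b₂; that is, (1/2)(TP/(TP+FN) + b₁TP/(b₁TP + b₂FP)) = (1/2)(TP/(TP+FN) + TP/(TP+FP)) if and only if b₁ = b₂. In particular, AURPC is not invariant under row scaling by distinct factors. -/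
/-- The AURPC index `κ` of a two-class confusion matrix is invariant
under row scaling by positive factors `b₁`, `b₂` if and only if `b₁ = b₂`. -/
theorem aurpc_invariant_iff_equal_scaling
    (TP FN FP b₁ b₂ : ℝ)
    (hTP : 0 < TP) (hFP : 0 < FP) (hFN : 0 ≤ FN) (hrow1 : 0 < TP + FN)
    (hb₁ : 0 < b₁) (hb₂ : 0 < b₂) :
    (1 / 2) * (TP / (TP + FN) + b₁ * TP / (b₁ * TP + b₂ * FP))
      = (1 / 2) * (TP / (TP + FN) + TP / (TP + FP)) ↔ b₁ = b₂ := by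
  have hd1 : b₁ * TP + b₂ * FP ≠ 0 := by positivity
  have hd2 : TP + FP ≠ 0 := by positivity
  have hd3 : TP + FN ≠ 0 := ne_of_gt hrow1
  constructor
  · intro h
    have h' : b₁ * TP / (b₁ * TP + b₂ * FP) = TP / (TP + FP) := by linarith
    rw [div_eq_div_iff hd1 hd2] at h'
    have : b₁ * (TP * FP) = b₂ * (TP * FP) := by nlinarith
    exact mul_right_cancel₀ (by positivity) this
  · rintro rfl
    have : b₁ * TP / (b₁ * TP + b₁ * FP) = TP / (TP + FP) := by
      rw [div_eq_div_iff hd1 hd2]; ring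
    rw [this]
end

section
/- For every integer C ≥ 2 and every C-class confusion matrix M, the AUROC-OVO index is an affine function of the ACSA index: ρ_o(M) = (C/(2(C−1)))·α(M) + (C−2)/(2(C−1)), where α(M) = (1/C)·Σ_i m_ii/n_i. -/
open Finset

/-- The AUROC-OVO index `ρ_o` of a `C`-class confusion matrix `m`
(whose `i`-th row sum plays the role of `n_i`). -/
noncomputable def rhoOVO (C : ℕ) (m : Fin C → Fin C → ℕ) : ℝ :=
  (1 / (2 * (C : ℝ))) *
    ∑ i, (1 + (m i i : ℝ) / (∑ j, (m i j : ℝ))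
      - ∑ j ∈ Finset.univ.erase i, (m j i : ℝ) / (((C : ℝ) - 1) * ∑ l, (m j l : ℝ)))

/-- The ACSA index `α` of a `C`-class confusion matrix `m`. -/
noncomputable def acsa (C : ℕ) (m : Fin C → Fin C → ℕ) : ℝ :=
  (1 / (C : ℝ)) * ∑ i, (m i i : ℝ) / (∑ j, (m i j : ℝ))

/-- For every `C ≥ 2` and every `C`-class confusion matrix, the AUROC-OVO
index is an affine function of the ACSA index:
`ρ_o(M) = (C/(2(C−1)))·α(M) + (C−2)/(2(C−1))`. -/
theorem rhoOVO_eq_affine_acsa (C : ℕ) (hC : 2 ≤ C)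
    (m : Fin C → Fin C → ℕ) (hrow : ∀ i, 0 < ∑ j, m i j) :
    rhoOVO C m = ((C : ℝ) / (2 * ((C : ℝ) - 1))) * acsa C m
      + ((C : ℝ) - 2) / (2 * ((C : ℝ) - 1)) := by
  set n : Fin C → ℝ := fun i => ∑ j, (m i j : ℝ) with hn
  have hnpos : ∀ i, 0 < n i := by
    intro i
    have := hrow i
    have : (0 : ℝ) < ((∑ j, m i j : ℕ) : ℝ) := by exact_mod_cast this
    simpa [hn, Nat.cast_sum] using this
  have hnne : ∀ i, n i ≠ 0 := fun i => (hnpos i).ne'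
  have hCpos : (0 : ℝ) < C := by positivity
  have hC1 : (C : ℝ) - 1 ≠ 0 := by
    have : (2 : ℝ) ≤ C := by exact_mod_cast hC
    linarith
  set S : ℝ := ∑ i, (m i i : ℝ) / n i with hS
  have key : ∑ i, ∑ j ∈ Finset.univ.erase i, (m j i : ℝ) / (((C : ℝ) - 1) * n j)
      = (C : ℝ) / ((C : ℝ) - 1) - S / ((C : ℝ) - 1) := by
    have h1 : ∀ i : Fin C, ∑ j ∈ Finset.univ.erase i, (m j i : ℝ) / (((C : ℝ) - 1) * n j)
        = (∑ j, (m j i : ℝ) / (((C : ℝ) - 1) * n j)) - (m i i : ℝ) / (((C : ℝ) - 1) * n i) := by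
      intro i
      exact Finset.sum_erase_eq_sub (Finset.mem_univ i)
    rw [Finset.sum_congr rfl fun i _ => h1 i, Finset.sum_sub_distrib, Finset.sum_comm]
    have h2 : ∀ j : Fin C, ∑ i, (m j i : ℝ) / (((C : ℝ) - 1) * n j) = 1 / ((C : ℝ) - 1) := by
      intro j
      rw [← Finset.sum_div]
      rw [show (∑ i, (m j i : ℝ)) = n j from rfl]
      rw [mul_comm, ← div_div, div_self (hnne j)]
    rw [Finset.sum_congr rfl fun j _ => h2 j]
    have h3 : ∑ i : Fin C, (m i i : ℝ) / (((C : ℝ) - 1) * n i) = S / ((C : ℝ) - 1) := by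
      rw [hS, Finset.sum_div]
      refine Finset.sum_congr rfl fun i _ => ?_
      rw [div_div]
      ring_nf
    rw [h3, Finset.sum_const, Finset.card_univ, Fintype.card_fin]
    ring
  have expand : rhoOVO C m = (1 / (2 * (C : ℝ))) *
      ((C : ℝ) + S - ((C : ℝ) / ((C : ℝ) - 1) - S / ((C : ℝ) - 1))) := by
    rw [rhoOVO]
    congr 1
    rw [Finset.sum_sub_distrib, Finset.sum_add_distrib, Finset.sum_const,
      Finset.card_univ, Fintype.card_fin, key]
    simp [hS, hn]
  rw [expand, acsa]
  rw [show (∑ i, (m i i : ℝ) / (∑ j, (m i j : ℝ))) = S from rfl]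
  field_simp
  ring
end

section
/- For every integer C ≥ 2, every C-class confusion matrix M satisfies (C−2)/(2(C−1)) ≤ ρ_o(M) ≤ 1; moreover both bounds are attained: any confusion matrix with all diagonal entries equal to 0 attains the lower bound (C−2)/(2(C−1)), and any diagonal confusion matrix (m_ij = 0 for i≠j) attains the upper bound 1. -/
open Finset

/-!
With `r_i = m_ii / n_i` the true positive rate of class `i`, the off-diagonal entries of all
columns regroup by rows into `∑_j (1 - r_j) / (C - 1)`, so that
`ρ_o(M) = (C - 2 + ∑_i r_i) / (2 (C - 1))`. Both bounds then come from `0 ≤ r_i ≤ 1`; a zero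
diagonal makes every `r_i` vanish and a diagonal matrix makes every `r_i` equal to one.
-/

section TruePositiveRate

variable {ι : Type*} [Fintype ι]

noncomputable def truePositiveRate (m : ι → ι → ℕ) (i : ι) : ℝ :=
  (m i i : ℝ) / ∑ j, (m i j : ℝ)

variable {m : ι → ι → ℕ}

lemma rowSum_cast_pos {i : ι} (hn : 0 < ∑ j, m i j) : (0 : ℝ) < ∑ j, (m i j : ℝ) := by
  exact_mod_cast hn

lemma truePositiveRate_nonneg (i : ι) : 0 ≤ truePositiveRate m i := by
  unfold truePositiveRate; positivity

lemma truePositiveRate_le_one (i : ι) : truePositiveRate m i ≤ 1 :=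
  div_le_one_of_le₀ (single_le_sum (f := fun j => (m i j : ℝ)) (fun _ _ => by positivity)
    (mem_univ i)) (by positivity)

lemma sum_truePositiveRate_le_card : ∑ i, truePositiveRate m i ≤ Fintype.card ι := by
  simpa using sum_le_sum fun i (_ : i ∈ univ) => truePositiveRate_le_one (m := m) i

lemma truePositiveRate_eq_zero {i : ι} (hii : m i i = 0) : truePositiveRate m i = 0 := by
  simp [truePositiveRate, hii]

lemma truePositiveRate_eq_one {i : ι} (hn : 0 < ∑ j, m i j) (hoff : ∀ j, j ≠ i → m i j = 0) :
    truePositiveRate m i = 1 := by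
  have hrow : ∑ j, (m i j : ℝ) = m i i :=
    sum_eq_single i (fun j _ hji => by simp [hoff j hji]) (by simp)
  rw [truePositiveRate, hrow]
  exact div_self (hrow ▸ rowSum_cast_pos hn).ne'

lemma sum_sum_erase_div_rowSum [DecidableEq ι] (hn : ∀ i, 0 < ∑ j, m i j) (c : ℝ) :
    ∑ i, ∑ j ∈ univ.erase i, (m j i : ℝ) / (c * ∑ l, (m j l : ℝ))
      = ∑ j, (1 - truePositiveRate m j) / c := by
  rw [sum_comm' (t' := univ) (s' := fun j => univ.erase j)
    (fun i j => by simp [mem_erase, ne_comm])]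
  refine sum_congr rfl fun j _ => ?_
  have hj := (rowSum_cast_pos (hn j)).ne'
  rw [← sum_div, sum_erase_eq_sub (mem_univ j), truePositiveRate]
  field_simp

end TruePositiveRate

lemma rhoOVO_eq_sum_truePositiveRate {C : ℕ} (hC : 2 ≤ C) {m : Fin C → Fin C → ℕ}
    (hn : ∀ i, 0 < ∑ j, m i j) :
    rhoOVO C m = ((C : ℝ) - 2 + ∑ i, truePositiveRate m i) / (2 * ((C : ℝ) - 1)) := by
  have hC0 : (C : ℝ) ≠ 0 := by positivity
  have hC1 : (C : ℝ) - 1 ≠ 0 := by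
    have : (2 : ℝ) ≤ C := by exact_mod_cast hC
    linarith
  rw [rhoOVO, sum_sub_distrib, sum_sum_erase_div_rowSum hn, ← sum_sub_distrib]
  simp only [← truePositiveRate.eq_1, sum_add_distrib, ← sum_div, sum_sub_distrib, sum_const,
    card_univ, Fintype.card_fin, nsmul_eq_mul, mul_one]
  field_simp
  ring

/-- For every `C ≥ 2`, every `C`-class confusion matrix `M` satisfies
`(C−2)/(2(C−1)) ≤ ρ_o(M) ≤ 1`; any matrix with zero diagonal attains the lower bound,
and any diagonal matrix attains the upper bound `1`. -/
theorem rhoOVO_bounds (C : ℕ) (hC : 2 ≤ C) :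
    (∀ m : Fin C → Fin C → ℕ, (∀ i, 0 < ∑ j, m i j) →
      ((C : ℝ) - 2) / (2 * ((C : ℝ) - 1)) ≤ rhoOVO C m ∧ rhoOVO C m ≤ 1) ∧
    (∀ m : Fin C → Fin C → ℕ, (∀ i, 0 < ∑ j, m i j) → (∀ i, m i i = 0) →
      rhoOVO C m = ((C : ℝ) - 2) / (2 * ((C : ℝ) - 1))) ∧
    (∀ m : Fin C → Fin C → ℕ, (∀ i, 0 < ∑ j, m i j) →
      (∀ i j, i ≠ j → m i j = 0) → rhoOVO C m = 1) := by
  have hden : (0 : ℝ) < 2 * ((C : ℝ) - 1) := by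
    have : (2 : ℝ) ≤ C := by exact_mod_cast hC
    linarith
  refine ⟨fun m hn => ?_, fun m hn hdiag => ?_, fun m hn hoff => ?_⟩
  · have hlow : 0 ≤ ∑ i, truePositiveRate m i := sum_nonneg fun i _ => truePositiveRate_nonneg i
    have hup : ∑ i, truePositiveRate m i ≤ C := by
      simpa using sum_truePositiveRate_le_card (m := m)
    rw [rhoOVO_eq_sum_truePositiveRate hC hn, div_le_one hden]
    exact ⟨by gcongr; linarith, by linarith⟩
  · simp [rhoOVO_eq_sum_truePositiveRate hC hn, truePositiveRate_eq_zero (hdiag _)]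
  · rw [rhoOVO_eq_sum_truePositiveRate hC hn, div_eq_one_iff_eq hden.ne']
    simp only [truePositiveRate_eq_one (hn _) fun j hj => hoff _ j (Ne.symm hj), sum_const,
      card_univ, Fintype.card_fin, nsmul_eq_mul, mul_one]
    ring
end

section
/- For every integer C ≥ 2, if M and M' are equivalent C-class confusion matrices (m_ij/n_i = m'_ij/n'_i for all i, j), then their mAURPC-OVA indices coincide: (1/(2C))·Σ_i ((m_ii/n_i)/(Σ_j m_ji/n_j) + m_ii/n_i) = (1/(2C))·Σ_i ((m'_ii/n'_i)/(Σ_j m'_ji/n'_j) + m'_ii/n'_i). -/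
open Finset

/-- For every `C ≥ 2`, equivalent `C`-class confusion matrices
(`m_ij/n_i = m'_ij/n'_i` for all `i, j`) have equal mAURPC-OVA indices. -/
theorem maurpcOVA_invariant_equiv (C : ℕ) (hC : 2 ≤ C)
    (m m' : Fin C → Fin C → ℕ)
    (hrow : ∀ i, 0 < ∑ j, m i j) (hrow' : ∀ i, 0 < ∑ j, m' i j)
    (hequiv : ∀ i j, (m i j : ℝ) / (∑ l, (m i l : ℝ))
      = (m' i j : ℝ) / (∑ l, (m' i l : ℝ))) :
    (1 / (2 * (C : ℝ))) *
        ∑ i, (((m i i : ℝ) / (∑ j, (m i j : ℝ))) /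
            (∑ j, (m j i : ℝ) / (∑ l, (m j l : ℝ)))
          + (m i i : ℝ) / (∑ j, (m i j : ℝ)))
      = (1 / (2 * (C : ℝ))) *
        ∑ i, (((m' i i : ℝ) / (∑ j, (m' i j : ℝ))) /
            (∑ j, (m' j i : ℝ) / (∑ l, (m' j l : ℝ)))
          + (m' i i : ℝ) / (∑ j, (m' i j : ℝ))) := by
  simp only [hequiv]
end

section
/- For every integer C ≥ 2, the limit as ε → 0⁺ of (ε·(1−ε)^{C−1})^{1/C} equals 0. Consequently, for the multi-class GMean index, the limiting value when a single class's accuracy ε tends to 0 while all other class accuracies equal 1−ε coincides with the global lower bound 0 of GMean, so GMean violates Condition 3. -/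
open Filter

/-- For every `C ≥ 2`, the limit as `ε → 0⁺` of
`(ε·(1−ε)^{C−1})^{1/C}` equals `0`, the global lower bound of the multi-class GMean
index; hence GMean violates Condition 3. -/
theorem gmean_limit_single_class_misclassified (C : ℕ) (hC : 2 ≤ C) :
    Tendsto (fun ε : ℝ => (ε * (1 - ε) ^ (C - 1)) ^ ((1 : ℝ) / C))
      (nhdsWithin 0 (Set.Ioi 0)) (nhds 0) := by
  have hC0 : (0:ℝ) < (C : ℝ) := by positivity
  have hinner : Tendsto (fun ε : ℝ => ε * (1 - ε) ^ (C - 1))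
      (nhdsWithin 0 (Set.Ioi 0)) (nhds 0) := by
    have : ContinuousAt (fun ε : ℝ => ε * (1 - ε) ^ (C - 1)) 0 := by
      fun_prop
    have h := this.tendsto.mono_left (nhdsWithin_le_nhds (s := Set.Ioi (0:ℝ)))
    simpa using h
  have hcont : ContinuousAt (fun x : ℝ => x ^ ((1 : ℝ) / C)) 0 := by
    apply Real.continuousAt_rpow_const
    right
    positivity
  have := hcont.tendsto.comp hinner
  rw [Real.zero_rpow (by positivity : (1:ℝ)/C ≠ 0)] at this
  exact this
end
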